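/- Let f : (1,∞) → ℝ be a positive C² function with f and |f''| bounded, f nonincreasing on some interval (a,∞) with a > 1, and f(x) → 0, f''(x) → 0 as x → ∞. Let σ > 0 be a constant. Define V(x) = (1/4)(f'(x)/f(x))² + (1/2)(f'/f)'(x) and W_σ(x) = V(x) + σ/f(x). Then W_σ(x) → ∞ as x → ∞. -/

import Mathlib

/-! Landau-type estimate: if `f ≥ 0` is nonincreasing and `|f''| ≤ ε` to the right of `x`, two
applications of the mean value theorem on `[x, x + h]` give `|f' x| ≤ f x / h + ε h` for every
`h > 0`, hence `f' x ^ 2 ≤ 4 ε f x`. As `(f'/f)' = f''/f - (f'/f)²`, this yields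
`W = -(f'/f)²/4 + f''/(2f) + σ/f ≥ (σ - 3ε/2)/f` wherever `|f''| ≤ ε`; since `f'' → 0` one may
take `ε = σ/2`, so `W ≥ σ/(4f) → ∞`. -/

open Set Filter Topology

lemma abs_deriv_le_of_abs_deriv2_le {f f' f'' : ℝ → ℝ} {x h ε : ℝ} (hh : 0 < h)
    (hf : ∀ y ∈ Icc x (x + h), HasDerivAt f (f' y) y)
    (hf' : ∀ y ∈ Icc x (x + h), HasDerivAt f' (f'' y) y)
    (hf'' : ∀ y ∈ Icc x (x + h), |f'' y| ≤ ε) :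
    |f' x| ≤ |f (x + h) - f x| / h + ε * h := by
  obtain ⟨c, hc, hslope⟩ := exists_hasDerivAt_eq_slope f f' (lt_add_of_pos_right x hh)
    (fun y hy => (hf y hy).continuousAt.continuousWithinAt)
    (fun y hy => hf y (Ioo_subset_Icc_self hy))
  have hslope_abs : |f' c| = |f (x + h) - f x| / h := by
    rw [hslope, add_sub_cancel_left, abs_div, abs_of_pos hh]
  have hx : x ∈ Icc x (x + h) := left_mem_Icc.2 (by linarith)
  have hε : 0 ≤ ε := (abs_nonneg _).trans (hf'' x hx)
  have hf'_lip : |f' c - f' x| ≤ ε * |c - x| :=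
    (convex_Icc x (x + h)).norm_image_sub_le_of_norm_hasDerivWithin_le
      (fun y hy => (hf' y hy).hasDerivWithinAt) hf'' hx (Ioo_subset_Icc_self hc)
  have hcx : |c - x| ≤ h := by
    rw [abs_of_pos (sub_pos.2 hc.1)]; linarith [hc.2]
  calc |f' x| ≤ |f' c| + |f' c - f' x| := by
        linarith [abs_sub_abs_le_abs_sub (f' x) (f' c), abs_sub_comm (f' c) (f' x)]
    _ ≤ |f (x + h) - f x| / h + ε * h := by
        rw [hslope_abs]
        gcongr
        exact hf'_lip.trans (by gcongr)

lemma sq_le_of_forall_abs_le_div_add_mul {u v ε : ℝ} (hε : 0 < ε) (hv : 0 ≤ v)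
    (hbound : ∀ t > 0, |u| ≤ v / t + ε * t) : u ^ 2 ≤ 4 * ε * v := by
  rcases eq_or_ne u 0 with rfl | hu
  · rw [zero_pow two_ne_zero]; positivity
  have hu' : 0 < |u| := abs_pos.2 hu
  have key := hbound (|u| / (2 * ε)) (by positivity)
  have hsplit : v / (|u| / (2 * ε)) + ε * (|u| / (2 * ε)) = 2 * ε * v / |u| + |u| / 2 := by
    field_simp
  have hu_le : |u| ≤ 4 * ε * v / |u| := by
    rw [hsplit] at key
    linarith [show 4 * ε * v / |u| = 2 * (2 * ε * v / |u|) by ring]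
  rwa [le_div_iff₀ hu', ← pow_two, sq_abs] at hu_le

lemma sq_deriv_le_of_antitoneOn {f f' f'' : ℝ → ℝ} {x ε : ℝ} (hε : 0 < ε)
    (hf : ∀ y ∈ Ici x, HasDerivAt f (f' y) y)
    (hf' : ∀ y ∈ Ici x, HasDerivAt f' (f'' y) y)
    (hf'' : ∀ y ∈ Ici x, |f'' y| ≤ ε)
    (hf_nonneg : ∀ y ∈ Ici x, 0 ≤ f y) (hf_anti : AntitoneOn f (Ici x)) :
    f' x ^ 2 ≤ 4 * ε * f x := by
  refine sq_le_of_forall_abs_le_div_add_mul hε (hf_nonneg x self_mem_Ici) fun h hh => ?_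
  have hxh : x + h ∈ Ici x := by simp only [mem_Ici]; linarith
  have hdrop : |f (x + h) - f x| ≤ f x := by
    rw [abs_sub_comm, abs_of_nonneg (sub_nonneg.2 (hf_anti self_mem_Ici hxh (by linarith)))]
    linarith [hf_nonneg _ hxh]
  calc |f' x| ≤ |f (x + h) - f x| / h + ε * h :=
        abs_deriv_le_of_abs_deriv2_le hh (fun y hy => hf y hy.1) (fun y hy => hf' y hy.1)
          (fun y hy => hf'' y hy.1)
    _ ≤ f x / h + ε * h := by gcongr

lemma div_le_quarter_sq_logDeriv_add_half_deriv_add_div {f f' f'' : ℝ → ℝ} {x ε σ : ℝ}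
    (hfx : 0 < f x) (hf : HasDerivAt f (f' x) x) (hf' : HasDerivAt f' (f'' x) x)
    (hsq : f' x ^ 2 ≤ 4 * ε * f x) (hf'' : -ε ≤ f'' x) :
    (σ - 3 / 2 * ε) / f x ≤
      1 / 4 * (f' x / f x) ^ 2 + 1 / 2 * deriv (fun t => f' t / f t) x + σ / f x := by
  have hquot : HasDerivAt (fun t => f' t / f t) ((f'' x * f x - f' x * f' x) / f x ^ 2) x :=
    hf'.div hf hfx.ne'
  rw [hquot.deriv, ← sub_nonneg]
  have hnum : 0 ≤ -(1 / 4) * f' x ^ 2 + 1 / 2 * f'' x * f x + 3 / 2 * ε * f x := by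
    nlinarith
  have key : 1 / 4 * (f' x / f x) ^ 2 + 1 / 2 * ((f'' x * f x - f' x * f' x) / f x ^ 2)
      + σ / f x - (σ - 3 / 2 * ε) / f x
      = (-(1 / 4) * f' x ^ 2 + 1 / 2 * f'' x * f x + 3 / 2 * ε * f x) / f x ^ 2 := by
    field_simp
    ring
  rw [key]
  positivity

theorem stmt_6_general (f f' f'' : ℝ → ℝ) (σ a : ℝ) (hσ : 0 < σ)
    (hderiv1 : ∀ x ∈ Set.Ioi (1 : ℝ), HasDerivAt f (f' x) x)
    (hderiv2 : ∀ x ∈ Set.Ioi (1 : ℝ), HasDerivAt f' (f'' x) x)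
    (hpos : ∀ x ∈ Set.Ioi (1 : ℝ), 0 < f x)
    (hmono : AntitoneOn f (Set.Ioi a))
    (hf0 : Filter.Tendsto f Filter.atTop (nhds 0))
    (hf''0 : Filter.Tendsto f'' Filter.atTop (nhds 0))
    (V W : ℝ → ℝ)
    (hV : ∀ x ∈ Set.Ioi (1 : ℝ),
      V x = (1 / 4) * (f' x / f x) ^ 2 + (1 / 2) * deriv (fun t => f' t / f t) x)
    (hW : ∀ x ∈ Set.Ioi (1 : ℝ), W x = V x + σ / f x) :
    Filter.Tendsto W Filter.atTop Filter.atTop := by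
  have hε : 0 < σ / 2 := by positivity
  obtain ⟨X, hX⟩ := eventually_atTop.1 <|
    (show Tendsto (fun y => |f'' y|) atTop (𝓝 0) by simpa using hf''0.abs).eventually_le_const hε
  have hlower : ∀ᶠ x in atTop, σ / 4 / f x ≤ W x := by
    filter_upwards [eventually_gt_atTop (max a 1), eventually_ge_atTop X] with x hx hxX
    have h1 : Ici x ⊆ Ioi 1 := Ici_subset_Ioi.2 (lt_of_le_of_lt (le_max_right a 1) hx)
    have ha : Ici x ⊆ Ioi a := Ici_subset_Ioi.2 (lt_of_le_of_lt (le_max_left a 1) hx)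
    have hsq := sq_deriv_le_of_antitoneOn hε (fun y hy => hderiv1 y (h1 hy))
      (fun y hy => hderiv2 y (h1 hy)) (fun y hy => hX y (hxX.trans hy))
      (fun y hy => (hpos y (h1 hy)).le) (hmono.mono ha)
    have hx1 : x ∈ Ioi 1 := h1 self_mem_Ici
    rw [hW x hx1, hV x hx1]
    convert div_le_quarter_sq_logDeriv_add_half_deriv_add_div (σ := σ) (hpos x hx1)
      (hderiv1 x hx1) (hderiv2 x hx1) hsq (neg_le_of_abs_le (hX x hxX)) using 2
    ring
  have hf0' : Tendsto f atTop (𝓝[>] 0) :=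
    tendsto_nhdsWithin_of_tendsto_nhds_of_eventually_within _ hf0
      (eventually_gt_atTop 1 |>.mono hpos)
  refine tendsto_atTop_mono' _ hlower ?_
  simpa only [div_eq_mul_inv, Pi.inv_apply] using
    hf0'.inv_tendsto_nhdsGT_zero.const_mul_atTop (by positivity : 0 < σ / 4)

/-- Let `f` be a positive twice continuously differentiable function on `(1,∞)` with `f` and
`|f''|` bounded, `f` nonincreasing on some `(a,∞)` with `a > 1`, and `f(x) → 0`,
`f''(x) → 0` as `x → ∞`. Let `σ > 0` be a constant. With
`V(x) = (1/4)(f'(x)/f(x))² + (1/2)(f'/f)'(x)` and `W_σ(x) = V(x) + σ/f(x)`,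
one has `W_σ(x) → ∞` as `x → ∞`. -/
theorem stmt_6 (f f' f'' : ℝ → ℝ) (σ a : ℝ) (hσ : 0 < σ) (ha : 1 < a)
    (hderiv1 : ∀ x ∈ Set.Ioi (1 : ℝ), HasDerivAt f (f' x) x)
    (hderiv2 : ∀ x ∈ Set.Ioi (1 : ℝ), HasDerivAt f' (f'' x) x)
    (hcont : ContinuousOn f'' (Set.Ioi (1 : ℝ)))
    (hpos : ∀ x ∈ Set.Ioi (1 : ℝ), 0 < f x)
    (hfbdd : BddAbove (f '' Set.Ioi (1 : ℝ)))
    (hf''bdd : BddAbove ((fun s => |f'' s|) '' Set.Ioi (1 : ℝ)))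
    (hmono : AntitoneOn f (Set.Ioi a))
    (hf0 : Filter.Tendsto f Filter.atTop (nhds 0))
    (hf''0 : Filter.Tendsto f'' Filter.atTop (nhds 0))
    (V W : ℝ → ℝ)
    (hV : ∀ x ∈ Set.Ioi (1 : ℝ),
      V x = (1 / 4) * (f' x / f x) ^ 2 + (1 / 2) * deriv (fun t => f' t / f t) x)
    (hW : ∀ x ∈ Set.Ioi (1 : ℝ), W x = V x + σ / f x) :
    Filter.Tendsto W Filter.atTop Filter.atTop :=
  stmt_6_general f f' f'' σ a hσ hderiv1 hderiv2 hpos hmono hf0 hf''0 V W hV hW
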